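/- arXiv:1005.2001 — 3 statements merged into one kernel-verified Lean document; each statement's English description precedes it below -/
import Mathlib

section
/- For every positive integer $k$, $\frac{1}{\sqrt{\pi(k + 4/\pi - 1)}} \le \frac{1 \cdot 3 \cdot 5 \cdots (2k-1)}{2 \cdot 4 \cdot 6 \cdots (2k)} \le \frac{1}{\sqrt{\pi(k + 1/4)}}$. -/
/-!
With `w n = C(2n, n) / 4 ^ n` one has `w (n + 1) = w n * (2n + 1) / (2n + 2)` and
`w n ^ 2 * (2n + 1) = 1 / W n`, where `W n → π / 2` is Wallis' product; hence
`w n ^ 2 * (n + c) → 1 / π` for every constant `c`. The increment of `n ↦ w n ^ 2 * (n + c)`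
has the sign of `(1 - 4c) n + 1 - 3c`, so the sequence increases for `c = 1 / 4` and decreases
from `n = 2` on for `c ≥ 3 / 11`, in particular for `c = 4 / π - 1` since `π < 22 / 7`.
At `k = 1` the lower bound is an equality.
-/

open Real Filter Topology

noncomputable def wallisRatio (n : ℕ) : ℝ := n.centralBinom / 4 ^ n

lemma wallisRatio_pos (n : ℕ) : 0 < wallisRatio n := by
  unfold wallisRatio
  have := n.centralBinom_pos
  positivity

lemma wallisRatio_succ (n : ℕ) :
    wallisRatio (n + 1) = wallisRatio n * ((2 * n + 1) / (2 * n + 2)) := by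
  have h : ((n : ℝ) + 1) * (n + 1).centralBinom = 2 * (2 * n + 1) * n.centralBinom := by
    exact_mod_cast n.succ_mul_centralBinom_succ
  unfold wallisRatio
  field_simp
  rw [pow_succ]
  linear_combination 4 ^ n * 2 * h

lemma wallisRatio_one : wallisRatio 1 = 1 / 2 := by
  norm_num [wallisRatio, Nat.centralBinom]

lemma wallisRatio_sq_mul_two_mul_add_one (n : ℕ) :
    wallisRatio n ^ 2 * (2 * n + 1) = (Wallis.W n)⁻¹ := by
  refine eq_inv_of_mul_eq_one_left ?_
  induction n with
  | zero => simp [wallisRatio, Wallis.W]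
  | succ n ih =>
    rw [Wallis.W_succ, wallisRatio_succ]
    push_cast
    field_simp
    linear_combination (2 * (n : ℝ) + 3) * ih

lemma tendsto_wallisRatio_sq_mul_add (c : ℝ) :
    Tendsto (fun n : ℕ ↦ wallisRatio n ^ 2 * (n + c)) atTop (𝓝 (1 / π)) := by
  have hW : Tendsto (fun n : ℕ ↦ wallisRatio n ^ 2 * (2 * n + 1)) atTop (𝓝 (π / 2)⁻¹) := by
    simpa only [wallisRatio_sq_mul_two_mul_add_one] using
      Wallis.tendsto_W_nhds_pi_div_two.inv₀ (by positivity)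
  have hfrac : Tendsto (fun n : ℕ ↦ (c + 1 * n) / (1 + 2 * n)) atTop (𝓝 (1 / 2)) :=
    tendsto_add_mul_div_add_mul_atTop_nhds c 1 1 two_ne_zero
  convert hW.mul hfrac using 1
  · ext n
    field_simp
    ring
  · field_simp

lemma wallisRatio_sq_mul_add_succ_sub (c : ℝ) (n : ℕ) :
    wallisRatio (n + 1) ^ 2 * ((n + 1 : ℕ) + c) - wallisRatio n ^ 2 * (n + c) =
      wallisRatio n ^ 2 * ((1 - 4 * c) * n + 1 - 3 * c) / (2 * n + 2) ^ 2 := by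
  rw [wallisRatio_succ]
  push_cast
  field_simp
  ring

lemma monotone_wallisRatio_sq_mul_add {c : ℝ} (hc : c ≤ 1 / 4) :
    Monotone fun n : ℕ ↦ wallisRatio n ^ 2 * (n + c) := by
  refine monotone_nat_of_le_succ fun n ↦ sub_nonneg.1 ?_
  rw [wallisRatio_sq_mul_add_succ_sub]
  have hsign : 0 ≤ (1 - 4 * c) * n + 1 - 3 * c := by
    nlinarith [(n.cast_nonneg : (0 : ℝ) ≤ n)]
  positivity

lemma wallisRatio_sq_mul_add_le_one_div_pi {c : ℝ} (hc : c ≤ 1 / 4) (n : ℕ) :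
    wallisRatio n ^ 2 * (n + c) ≤ 1 / π :=
  (monotone_wallisRatio_sq_mul_add hc).ge_of_tendsto (tendsto_wallisRatio_sq_mul_add c) n

lemma antitone_wallisRatio_sq_mul_add {c : ℝ} (hc : 3 / 11 ≤ c) {m : ℕ} (hm : 2 ≤ m) :
    Antitone fun n : ℕ ↦ wallisRatio (n + m) ^ 2 * ((n + m : ℕ) + c) := by
  refine antitone_nat_of_succ_le fun n ↦ sub_nonpos.1 ?_
  rw [Nat.succ_add, wallisRatio_sq_mul_add_succ_sub]
  have hm' : (2 : ℝ) ≤ (n + m : ℕ) := by exact_mod_cast le_add_left hm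
  have hsign : (1 - 4 * c) * (n + m : ℕ) + 1 - 3 * c ≤ 0 := by nlinarith
  exact div_nonpos_of_nonpos_of_nonneg
    (mul_nonpos_of_nonneg_of_nonpos (sq_nonneg _) hsign) (sq_nonneg _)

lemma one_div_pi_le_wallisRatio_sq_mul_add {c : ℝ} (hc : 3 / 11 ≤ c) {m : ℕ} (hm : 2 ≤ m) :
    1 / π ≤ wallisRatio m ^ 2 * (m + c) := by
  have hlim := (tendsto_add_atTop_iff_nat m).2 (tendsto_wallisRatio_sq_mul_add c)
  simpa using (antitone_wallisRatio_sq_mul_add hc hm).le_of_tendsto hlim 0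

lemma three_div_eleven_le_four_div_pi_sub_one : 3 / 11 ≤ 4 / π - 1 := by
  rw [le_sub_iff_add_le, le_div_iff₀ pi_pos]
  linarith [pi_lt_d4]

lemma one_div_pi_le_wallisRatio_sq_mul {k : ℕ} (hk : 1 ≤ k) :
    1 / π ≤ wallisRatio k ^ 2 * (k + 4 / π - 1) := by
  obtain rfl | hk2 := hk.eq_or_lt
  · rw [wallisRatio_one]
    field_simp
    norm_num
  · rw [add_sub_assoc]
    exact one_div_pi_le_wallisRatio_sq_mul_add three_div_eleven_le_four_div_pi_sub_one hk2

lemma one_div_sqrt_mul_le_iff {x a b : ℝ} (hx : 0 ≤ x) (ha : 0 < a) (hb : 0 < b) :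
    1 / √(b * a) ≤ x ↔ 1 / b ≤ x ^ 2 * a := by
  rw [div_le_iff₀ (sqrt_pos.2 (mul_pos hb ha)), ← sqrt_sq hx, ← sqrt_mul (sq_nonneg x),
    one_le_sqrt, sqrt_sq hx, div_le_iff₀' hb, mul_left_comm]

lemma le_one_div_sqrt_mul_iff {x a b : ℝ} (hx : 0 ≤ x) (ha : 0 < a) (hb : 0 < b) :
    x ≤ 1 / √(b * a) ↔ x ^ 2 * a ≤ 1 / b := by
  rw [le_div_iff₀ (sqrt_pos.2 (mul_pos hb ha)), ← sqrt_sq hx, ← sqrt_mul (sq_nonneg x),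
    sqrt_le_one, sqrt_sq hx, le_div_iff₀' hb, mul_left_comm]

theorem wallis_ratio_bounds (k : ℕ) (hk : 1 ≤ k) :
    1 / Real.sqrt (Real.pi * (k + 4 / Real.pi - 1)) ≤
      ((Nat.choose (2 * k) k : ℝ) / 4 ^ k) ∧
    ((Nat.choose (2 * k) k : ℝ) / 4 ^ k) ≤ 1 / Real.sqrt (Real.pi * (k + 1 / 4)) := by
  change 1 / √(π * (k + 4 / π - 1)) ≤ wallisRatio k ∧ wallisRatio k ≤ 1 / √(π * (k + 1 / 4))
  have hW := (wallisRatio_pos k).le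
  have hk0 : 0 < (k : ℝ) + 4 / π - 1 := by
    have : (1 : ℝ) ≤ k := by exact_mod_cast hk
    have : 0 < 4 / π := by positivity
    linarith
  exact ⟨(one_div_sqrt_mul_le_iff hW hk0 pi_pos).2 (one_div_pi_le_wallisRatio_sq_mul hk),
    (le_one_div_sqrt_mul_iff hW (by positivity) pi_pos).2
      (wallisRatio_sq_mul_add_le_one_div_pi le_rfl k)⟩
end

section
/- Let $d \ge 1$ be an integer and let $f(z) = \frac{1}{2}((1+z)^{2d} + (1-z)^{2d})$. Then $f(z)f'(z) + z\big(f''(z) f(z) - (f'(z))^2\big) = \frac{d}{2}\left((z+1)^{4d-2} + 4(2d-1) z (z^2-1)^{2d-2} - (z-1)^{4d-2}\right)$ as a polynomial identity in $z$. -/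
theorem edelman_kostlan_numerator (d : ℕ) (hd : 1 ≤ d)
    (f : ℝ → ℝ) (hf : ∀ z, f z = (1 / 2) * ((1 + z) ^ (2 * d) + (1 - z) ^ (2 * d))) (z : ℝ) :
    f z * deriv f z + z * (deriv (deriv f) z * f z - (deriv f z) ^ 2) =
      (d / 2 : ℝ) *
        ((z + 1) ^ (4 * d - 2) + 4 * (2 * d - 1) * z * (z ^ 2 - 1) ^ (2 * d - 2) -
          (z - 1) ^ (4 * d - 2)) := by
  obtain ⟨m, rfl⟩ : ∃ m, d = m + 1 := ⟨d - 1, by omega⟩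
  have hfun : f = fun z => (1 / 2 : ℝ) * ((1 + z) ^ (2 * (m + 1)) + (1 - z) ^ (2 * (m + 1))) :=
    funext hf
  have h1 : ∀ x : ℝ,
      HasDerivAt f (((m : ℝ) + 1) * ((1 + x) ^ (2 * m + 1) - (1 - x) ^ (2 * m + 1))) x := by
    intro x
    rw [hfun]
    have ha : HasDerivAt (fun y : ℝ => (1 + y) ^ (2 * (m + 1)))
        ((2 * (m + 1) : ℕ) * (1 + x) ^ (2 * (m + 1) - 1) * 1) x :=
      ((hasDerivAt_id x).const_add 1).pow _
    have hb : HasDerivAt (fun y : ℝ => (1 - y) ^ (2 * (m + 1)))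
        ((2 * (m + 1) : ℕ) * (1 - x) ^ (2 * (m + 1) - 1) * (-1)) x :=
      ((hasDerivAt_id x).const_sub 1).pow _
    have h := (ha.add hb).const_mul (1 / 2 : ℝ)
    refine h.congr_deriv ?_
    rw [show 2 * (m + 1) - 1 = 2 * m + 1 from by omega]
    push_cast
    ring
  have hd1 : deriv f = fun x : ℝ =>
      ((m : ℝ) + 1) * ((1 + x) ^ (2 * m + 1) - (1 - x) ^ (2 * m + 1)) :=
    funext fun x => (h1 x).deriv
  have h2 : ∀ x : ℝ,
      HasDerivAt (deriv f)
        (((m : ℝ) + 1) * (2 * m + 1) * ((1 + x) ^ (2 * m) + (1 - x) ^ (2 * m))) x := by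
    intro x
    rw [hd1]
    have ha : HasDerivAt (fun y : ℝ => (1 + y) ^ (2 * m + 1))
        ((2 * m + 1 : ℕ) * (1 + x) ^ (2 * m + 1 - 1) * 1) x :=
      ((hasDerivAt_id x).const_add 1).pow _
    have hb : HasDerivAt (fun y : ℝ => (1 - y) ^ (2 * m + 1))
        ((2 * m + 1 : ℕ) * (1 - x) ^ (2 * m + 1 - 1) * (-1)) x :=
      ((hasDerivAt_id x).const_sub 1).pow _
    have h := (ha.sub hb).const_mul ((m : ℝ) + 1)
    refine h.congr_deriv ?_
    rw [show 2 * m + 1 - 1 = 2 * m from by omega]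
    push_cast
    ring
  rw [hf z, (h1 z).deriv, (h2 z).deriv]
  have e1 : (1 + z) ^ (2 * m + 1) = (1 + z) ^ (2 * m) * (1 + z) := pow_succ _ _
  have e2 : (1 - z) ^ (2 * m + 1) = (1 - z) ^ (2 * m) * (1 - z) := pow_succ _ _
  have e3 : (1 + z) ^ (2 * (m + 1)) = (1 + z) ^ (2 * m) * (1 + z) ^ 2 := by
    ring
  have e4 : (1 - z) ^ (2 * (m + 1)) = (1 - z) ^ (2 * m) * (1 - z) ^ 2 := by
    ring
  have e5 : (z + 1) ^ (4 * (m + 1) - 2) = ((1 + z) ^ (2 * m)) ^ 2 * (1 + z) ^ 2 := by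
    rw [add_comm z 1, ← pow_mul, ← pow_add]; congr 1; omega
  have e6 : (z - 1) ^ (4 * (m + 1) - 2) = ((1 - z) ^ (2 * m)) ^ 2 * (1 - z) ^ 2 := by
    rw [show (z - 1 : ℝ) = -(1 - z) from by ring, Even.neg_pow ⟨2 * m + 1, by omega⟩,
      ← pow_mul, ← pow_add]
    congr 1; omega
  have e7 : (z ^ 2 - 1) ^ (2 * (m + 1) - 2) = (1 + z) ^ (2 * m) * (1 - z) ^ (2 * m) := by
    rw [show 2 * (m + 1) - 2 = 2 * m from by omega,
      show (z ^ 2 - 1 : ℝ) = -((1 + z) * (1 - z)) from by ring,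
      Even.neg_pow ⟨m, by ring⟩, mul_pow]
  rw [e1, e2, e3, e4, e5, e6, e7]
  push_cast
  ring
end

section
/- Let $d \ge 1$ and define $I = \frac{\sqrt{2d}}{\pi} \int_{0}^{\pi/2} \frac{\sqrt{1 + (2d-1)\sin^2\theta\,(\cos\theta)^{2d-2} - (\cos\theta)^{4d-2}}}{1 + (\cos\theta)^{2d}}\, d\theta$. Then $I \ge \frac{\sqrt{2d}}{2} - \sqrt{\frac{8}{\pi^3}}$. -/
open Real intervalIntegral

/-! With `c = cos θ`, part of the middle term of the radicand already compensates for
`c ^ (4d - 2) - c ^ (4d)`, so the radicand is at least `1 - c ^ (4d) ≥ (1 - c ^ (4d)) ^ 2` and the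
integrand is at least `1 - c ^ (2d)`. Hence `I ≥ √(2d) / 2 - √(2d) / π * W (2d)` with
`W n = ∫₀^{π/2} cos ^ n`. The Wallis recurrence gives `(n + 1) W n W (n + 1) = π / 2`; as `W` is
antitone, `n W n ^ 2 ≤ π / 2`, which together with `π ^ 2 ≤ 16` bounds the error term by
`√(8 / π ^ 3)`. -/

theorem integral_cos_pow_succ_succ_zero_pi_div_two (n : ℕ) :
    ∫ x in (0:ℝ)..π / 2, cos x ^ (n + 2) = (n + 1) / (n + 2) * ∫ x in (0:ℝ)..π / 2, cos x ^ n := by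
  simp [integral_cos_pow]

theorem integral_cos_pow_succ_le_zero_pi_div_two (n : ℕ) :
    ∫ x in (0:ℝ)..π / 2, cos x ^ (n + 1) ≤ ∫ x in (0:ℝ)..π / 2, cos x ^ n :=
  integral_mono_on (by positivity) ((continuous_cos.pow _).intervalIntegrable _ _)
    ((continuous_cos.pow _).intervalIntegrable _ _) fun x hx =>
      pow_le_pow_of_le_one (cos_nonneg_of_mem_Icc ⟨by linarith [pi_pos, hx.1], hx.2⟩)
        (cos_le_one x) n.le_succ

theorem integral_cos_pow_nonneg_zero_pi_div_two (n : ℕ) :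
    0 ≤ ∫ x in (0:ℝ)..π / 2, cos x ^ n :=
  integral_nonneg (by positivity) fun x hx =>
    pow_nonneg (cos_nonneg_of_mem_Icc ⟨by linarith [pi_pos, hx.1], hx.2⟩) n

theorem succ_mul_integral_cos_pow_mul_integral_cos_pow_succ_zero_pi_div_two (n : ℕ) :
    (n + 1) * (∫ x in (0:ℝ)..π / 2, cos x ^ n) * ∫ x in (0:ℝ)..π / 2, cos x ^ (n + 1) = π / 2 := by
  induction n with
  | zero => simp
  | succ n ih =>
    calc _ = (n + 1) * (∫ x in (0:ℝ)..π / 2, cos x ^ n) *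
          ∫ x in (0:ℝ)..π / 2, cos x ^ (n + 1) := by
          rw [integral_cos_pow_succ_succ_zero_pi_div_two n]
          push_cast
          field_simp
          ring
      _ = π / 2 := ih

theorem natCast_mul_sq_integral_cos_pow_le (n : ℕ) :
    n * (∫ x in (0:ℝ)..π / 2, cos x ^ n) ^ 2 ≤ π / 2 := by
  cases n with
  | zero => simpa using pi_div_two_pos.le
  | succ n =>
    calc ((n + 1 : ℕ) : ℝ) * (∫ x in (0:ℝ)..π / 2, cos x ^ (n + 1)) ^ 2
        ≤ (n + 1) * (∫ x in (0:ℝ)..π / 2, cos x ^ n) * ∫ x in (0:ℝ)..π / 2, cos x ^ (n + 1) := by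
          rw [sq, ← mul_assoc]
          push_cast
          gcongr
          · exact integral_cos_pow_nonneg_zero_pi_div_two _
          · exact integral_cos_pow_succ_le_zero_pi_div_two n
      _ = π / 2 := succ_mul_integral_cos_pow_mul_integral_cos_pow_succ_zero_pi_div_two n

theorem one_sub_pow_le_sqrt_div {d : ℕ} (hd : 1 ≤ d) {c s : ℝ} (hc : 0 ≤ c)
    (hsc : s ^ 2 + c ^ 2 = 1) :
    1 - c ^ (2 * d) ≤
      √(1 + (2 * d - 1) * s ^ 2 * c ^ (2 * d - 2) - c ^ (4 * d - 2)) / (1 + c ^ (2 * d)) := by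
  obtain ⟨k, rfl⟩ : ∃ k, d = k + 1 := ⟨d - 1, by omega⟩
  have hc2 : c ^ 2 ≤ 1 := by nlinarith
  set e := c ^ (2 * k) with he
  have he0 : 0 ≤ e := by positivity
  have he1 : e ≤ 1 := pow_le_one₀ hc (by nlinarith)
  have h2d : c ^ (2 * (k + 1)) = e * c ^ 2 := by rw [he, ← pow_add, mul_add, mul_one]
  have h2d2 : c ^ (2 * (k + 1) - 2) = e := by rw [he, show 2 * (k + 1) - 2 = 2 * k by omega]
  have h4d2 : c ^ (4 * (k + 1) - 2) = e ^ 2 * c ^ 2 := by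
    rw [he, ← pow_mul, ← pow_add]; congr 1; omega
  rw [h2d, h2d2, h4d2]
  set a := e * c ^ 2
  have ha0 : 0 ≤ a := by positivity
  have ha1 : a ≤ 1 := by nlinarith
  have hrad : 1 - a ^ 2 ≤ 1 + (2 * ((k + 1 : ℕ) : ℝ) - 1) * s ^ 2 * e - e ^ 2 * c ^ 2 := by
    have hk : (1 : ℝ) ≤ 2 * ((k + 1 : ℕ) : ℝ) - 1 := by
      push_cast; linarith [(k.cast_nonneg : (0:ℝ) ≤ k)]
    have hs : s ^ 2 = 1 - c ^ 2 := by linarith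
    rw [hs]
    nlinarith [mul_nonneg (mul_nonneg he0 (sub_nonneg.2 hc2)) (sub_nonneg.2 hk),
      mul_nonneg (mul_nonneg he0 (sub_nonneg.2 hc2))
        (sub_nonneg.2 (mul_le_one₀ he1 (sq_nonneg c) hc2))]
  rw [le_div_iff₀ (by positivity)]
  calc (1 - a) * (1 + a) = 1 - a ^ 2 := by ring
    _ ≤ _ := by
      have ha2 : 0 ≤ 1 - a ^ 2 := by nlinarith
      exact Real.le_sqrt_of_sq_le (by nlinarith [mul_nonneg ha2 (sq_nonneg a)])

theorem continuous_sqrt_div_one_add_cos_pow (d : ℕ) :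
    Continuous fun θ : ℝ =>
      √(1 + (2 * d - 1) * sin θ ^ 2 * cos θ ^ (2 * d - 2) - cos θ ^ (4 * d - 2)) /
        (1 + cos θ ^ (2 * d)) :=
  (continuous_sqrt.comp (by fun_prop)).div (by fun_prop) fun θ => by
    have := (even_two_mul d).pow_nonneg (cos θ); positivity

theorem pi_div_two_sub_integral_cos_pow_le {d : ℕ} (hd : 1 ≤ d) :
    π / 2 - ∫ θ in (0:ℝ)..π / 2, cos θ ^ (2 * d) ≤
      ∫ θ in (0:ℝ)..π / 2,
        √(1 + (2 * d - 1) * sin θ ^ 2 * cos θ ^ (2 * d - 2) - cos θ ^ (4 * d - 2)) /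
          (1 + cos θ ^ (2 * d)) := by
  have hcos : IntervalIntegrable (fun θ => cos θ ^ (2 * d)) MeasureTheory.volume 0 (π / 2) :=
    (continuous_cos.pow _).intervalIntegrable _ _
  calc π / 2 - ∫ θ in (0:ℝ)..π / 2, cos θ ^ (2 * d)
      = ∫ θ in (0:ℝ)..π / 2, (1 - cos θ ^ (2 * d)) := by
        rw [integral_sub intervalIntegrable_const hcos]
        simp
    _ ≤ _ := integral_mono_on pi_div_two_pos.le (intervalIntegrable_const.sub hcos)
        ((continuous_sqrt_div_one_add_cos_pow d).intervalIntegrable _ _) fun θ hθ =>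
          one_sub_pow_le_sqrt_div hd (cos_nonneg_of_mem_Icc ⟨by linarith [pi_pos, hθ.1], hθ.2⟩)
            (sin_sq_add_cos_sq θ)

theorem sqrt_two_mul_div_pi_mul_integral_cos_pow_le (d : ℕ) :
    √(2 * d) / π * ∫ θ in (0:ℝ)..π / 2, cos θ ^ (2 * d) ≤ √(8 / π ^ 3) := by
  apply Real.le_sqrt_of_sq_le
  have hT := natCast_mul_sq_integral_cos_pow_le (2 * d)
  push_cast at hT
  rw [mul_pow, div_pow, sq_sqrt (by positivity), div_mul_eq_mul_div,
    div_le_div_iff₀ (by positivity) (by positivity)]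
  have hπ : π ^ 2 ≤ 16 := by nlinarith [pi_pos, pi_lt_four]
  calc 2 * d * (∫ θ in (0:ℝ)..π / 2, cos θ ^ (2 * d)) ^ 2 * π ^ 3 ≤ π / 2 * π ^ 3 := by gcongr
    _ = π ^ 2 / 2 * π ^ 2 := by ring
    _ ≤ 8 * π ^ 2 := by gcongr; linarith

theorem expected_roots_lower_bound (d : ℕ) (hd : 1 ≤ d) (I : ℝ)
    (hI : I = Real.sqrt (2 * d) / Real.pi *
        ∫ θ in (0:ℝ)..(Real.pi / 2),
          Real.sqrt (1 + (2 * d - 1) * (Real.sin θ) ^ 2 * (Real.cos θ) ^ (2 * d - 2) -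
                (Real.cos θ) ^ (4 * d - 2)) / (1 + (Real.cos θ) ^ (2 * d))) :
    Real.sqrt (2 * d) / 2 - Real.sqrt (8 / Real.pi ^ 3) ≤ I := by
  set T := ∫ θ in (0:ℝ)..π / 2, cos θ ^ (2 * d)
  calc √(2 * d) / 2 - √(8 / π ^ 3) ≤ √(2 * d) / 2 - √(2 * d) / π * T := by
        gcongr; exact sqrt_two_mul_div_pi_mul_integral_cos_pow_le d
    _ = √(2 * d) / π * (π / 2 - T) := by field_simp
    _ ≤ I := hI ▸ by gcongr; exact pi_div_two_sub_integral_cos_pow_le hd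
end
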